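/- arXiv:2012.09493 — 5 statements merged into one kernel-verified Lean document; each statement's English description precedes it below -/
import Mathlib

section
/- In the mean-reverting model with β = β(k) := (I − k − (a/b)(ℓ/ρ) − λc/ρ)(ρ+b)/ℓ + a/b, where ℓ, ρ, b > 0, the optimal threshold x*(k) (the unique root of (x − β(k))ψ_ρ'(x) − ψ_ρ(x) = 0 in (β(k), ∞)) satisfies ∂x*/∂k = −(ψ_ρ'(x*(k)))² (ρ+b)/ℓ / (ψ_ρ(x*(k)) ψ_ρ''(x*(k))) < 0. That is, the optimal switching threshold is strictly decreasing in the incentive k. -/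
open Filter Function

/-!
Since `ψ' > 0`, the root equation `(x - β) ψ'(x) - ψ(x) = 0` reads `x - ψ(x)/ψ'(x) = β`, and the
left side has derivative `ψ ψ'' / ψ'^2 > 0`. As `β(k)` is affine and strictly decreasing in `k`,
`x*` is a right inverse of a strictly decreasing differentiable map `f`; it is then an antitone
surjection of `ℝ`, hence continuous, and the inverse function rule gives
`∂x*/∂k = 1 / f'(x*) = -((ρ + b)/ℓ) ψ'^2 / (ψ ψ'')`.
-/

theorem StrictAnti.hasDerivAt_of_leftInverse {f g : ℝ → ℝ} {f' k : ℝ} (hf : StrictAnti f)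
    (hfg : LeftInverse f g) (hderiv : HasDerivAt f f' (g k)) (hf' : f' ≠ 0) :
    HasDerivAt g f'⁻¹ k := by
  have hgf : LeftInverse g f := fun x => hf.injective (hfg (f x))
  have hg_anti : Antitone g := fun a b hab => by
    by_contra! hlt
    have := hf hlt
    rw [hfg, hfg] at this
    linarith
  have hg_cont : Continuous g := by
    have hmono : Monotone (fun k => -g k) := fun a b hab => neg_le_neg (hg_anti hab)
    have hsurj : Surjective (fun k => -g k) := fun x => ⟨f (-x), by simp only [hgf (-x), neg_neg]⟩
    convert (hmono.continuous_of_surjective hsurj).neg using 1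
    ext k
    simp only [Pi.neg_apply, neg_neg]
  exact hderiv.of_local_left_inverse hg_cont.continuousAt hf' (Eventually.of_forall hfg)

theorem hasDerivAt_of_apply_eq_sub_mul {h h' g : ℝ → ℝ} {c M : ℝ} (hM : 0 < M)
    (hd : ∀ x, HasDerivAt h (h' x) x) (hpos : ∀ x, 0 < h' x) (hg : ∀ k, h (g k) = c - M * k)
    (k : ℝ) : HasDerivAt g (-(M / h' (g k))) k := by
  have hdf : ∀ x, HasDerivAt (fun x => (c - h x) / M) (-h' x / M) x := fun x =>
    ((hd x).const_sub c).div_const M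
  have hanti : StrictAnti (fun x => (c - h x) / M) :=
    strictAnti_of_hasDerivAt_neg hdf fun x => div_neg_of_neg_of_pos (neg_neg_of_pos (hpos x)) hM
  have hfg : LeftInverse (fun x => (c - h x) / M) g := fun k => by
    simp only [hg k]
    field_simp
    ring
  have hne : -h' (g k) / M ≠ 0 := div_ne_zero (neg_ne_zero.mpr (hpos _).ne') hM.ne'
  convert hanti.hasDerivAt_of_leftInverse hfg (hdf (g k)) hne using 1
  rw [inv_div, div_neg]

theorem hasDerivAt_sub_div {ψ ψ' ψ'' : ℝ → ℝ} {x : ℝ} (hd1 : HasDerivAt ψ (ψ' x) x)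
    (hd2 : HasDerivAt ψ' (ψ'' x) x) (hne : ψ' x ≠ 0) :
    HasDerivAt (fun x => x - ψ x / ψ' x) (ψ x * ψ'' x / ψ' x ^ 2) x := by
  refine ((hasDerivAt_id' x).sub (hd1.div hd2 hne)).congr_deriv ?_
  field_simp
  ring

theorem stmt_7_general (a b ρ ℓ lam c Inv : ℝ)
    (hb : 0 < b) (hρ : 0 < ρ) (hℓ : 0 < ℓ)
    (ψ ψ' ψ'' : ℝ → ℝ)
    (hψpos : ∀ x, 0 < ψ x)
    (hψ'pos : ∀ x, 0 < ψ' x)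
    (hψ''pos : ∀ x, 0 < ψ'' x)
    (hd1 : ∀ x, HasDerivAt ψ (ψ' x) x)
    (hd2 : ∀ x, HasDerivAt ψ' (ψ'' x) x)
    (β : ℝ → ℝ)
    (hβ : ∀ k, β k = (Inv - k - (a / b) * (ℓ / ρ) - lam * c / ρ) * ((ρ + b) / ℓ) + a / b)
    (xstar : ℝ → ℝ)
    (hroot : ∀ k : ℝ, xstar k ∈ Set.Ioi (β k) ∧
      (xstar k - β k) * ψ' (xstar k) - ψ (xstar k) = 0) :
    (∀ k : ℝ, HasDerivAt xstar
        (-(ψ' (xstar k)) ^ 2 * ((ρ + b) / ℓ) / (ψ (xstar k) * ψ'' (xstar k))) k ∧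
      -(ψ' (xstar k)) ^ 2 * ((ρ + b) / ℓ) / (ψ (xstar k) * ψ'' (xstar k)) < 0)
    ∧ StrictAnti xstar := by
  have hM : 0 < (ρ + b) / ℓ := div_pos (by linarith) hℓ
  have hβ_affine : ∀ k, β k = β 0 - (ρ + b) / ℓ * k := fun k => by rw [hβ k, hβ 0]; ring
  have hthreshold : ∀ k, xstar k - ψ (xstar k) / ψ' (xstar k) = β 0 - (ρ + b) / ℓ * k := by
    intro k
    have hne := (hψ'pos (xstar k)).ne'
    rw [← hβ_affine k]
    field_simp
    linear_combination (hroot k).2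
  have hderiv : ∀ k, HasDerivAt xstar
      (-(ψ' (xstar k)) ^ 2 * ((ρ + b) / ℓ) / (ψ (xstar k) * ψ'' (xstar k))) k := by
    intro k
    convert hasDerivAt_of_apply_eq_sub_mul hM
      (fun x => hasDerivAt_sub_div (hd1 x) (hd2 x) (hψ'pos x).ne')
      (fun x => div_pos (mul_pos (hψpos x) (hψ''pos x)) (pow_pos (hψ'pos x) 2)) hthreshold k
      using 1
    have := (hψ'pos (xstar k)).ne'
    field_simp
  have hneg : ∀ k,
      -(ψ' (xstar k)) ^ 2 * ((ρ + b) / ℓ) / (ψ (xstar k) * ψ'' (xstar k)) < 0 := fun k =>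
    div_neg_of_neg_of_pos (by nlinarith [pow_pos (hψ'pos (xstar k)) 2])
      (mul_pos (hψpos _) (hψ''pos _))
  exact ⟨fun k => ⟨hderiv k, hneg k⟩, strictAnti_of_hasDerivAt_neg hderiv hneg⟩

/-- In the mean-reverting model, with
β(k) = (I − k − (a/b)(ℓ/ρ) − λc/ρ)(ρ+b)/ℓ + a/b, the optimal threshold x*(k) (unique root
in (β(k), ∞) of (x − β(k))ψ_ρ'(x) − ψ_ρ(x) = 0) satisfies
∂x*/∂k = −(ψ_ρ'(x*))²(ρ+b)/ℓ / (ψ_ρ(x*)ψ_ρ''(x*)) < 0 : strictly decreasing in the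
incentive k. -/
theorem stmt_7 (a b σ ρ ℓ lam c Inv : ℝ)
    (hb : 0 < b) (hσ : 0 < σ) (hρ : 0 < ρ) (hℓ : 0 < ℓ)
    (ψ ψ' ψ'' : ℝ → ℝ)
    (hψpos : ∀ x, 0 < ψ x)
    (hψ'pos : ∀ x, 0 < ψ' x)
    (hψ''pos : ∀ x, 0 < ψ'' x)
    (hd1 : ∀ x, HasDerivAt ψ (ψ' x) x)
    (hd2 : ∀ x, HasDerivAt ψ' (ψ'' x) x)
    (hcont : Continuous ψ'')
    (hODE : ∀ x, σ ^ 2 / 2 * ψ'' x + (a - b * x) * ψ' x - ρ * ψ x = 0)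
    (β : ℝ → ℝ)
    (hβ : ∀ k, β k = (Inv - k - (a / b) * (ℓ / ρ) - lam * c / ρ) * ((ρ + b) / ℓ) + a / b)
    (xstar : ℝ → ℝ)
    (hroot : ∀ k : ℝ, xstar k ∈ Set.Ioi (β k) ∧
      (xstar k - β k) * ψ' (xstar k) - ψ (xstar k) = 0)
    (huniq : ∀ k x : ℝ, x ∈ Set.Ioi (β k) → (x - β k) * ψ' x - ψ x = 0 → x = xstar k) :
    (∀ k : ℝ, HasDerivAt xstar
        (-(ψ' (xstar k)) ^ 2 * ((ρ + b) / ℓ) / (ψ (xstar k) * ψ'' (xstar k))) k ∧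
      -(ψ' (xstar k)) ^ 2 * ((ρ + b) / ℓ) / (ψ (xstar k) * ψ'' (xstar k)) < 0)
    ∧ StrictAnti xstar :=
  stmt_7_general a b ρ ℓ lam c Inv hb hρ hℓ ψ ψ' ψ'' hψpos hψ'pos hψ''pos hd1 hd2 β hβ xstar hroot
end

section
/- In the mean-reverting model with β = β(λ) := (I − k − (a/b)(ℓ/ρ) − λc/ρ)(ρ+b)/ℓ + a/b, where ℓ, ρ, b, c > 0, the optimal threshold x*(λ) satisfies ∂x*/∂λ = −(ψ_ρ'(x*(λ)))² (c/ρ)((ρ+b)/ℓ) / (ψ_ρ(x*(λ)) ψ_ρ''(x*(λ))) < 0. That is, the optimal switching threshold is strictly decreasing in the traffic-ban intensity λ. -/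
/-! The smooth-fit condition `(x - β) ψ'(x) = ψ(x)` says that the tangent to `ψ` at `x` meets the
axis at `β`, i.e. that the Newton map `N(x) = x - ψ(x)/ψ'(x)` sends `x*(λ)` to `β(λ)`. Since
`N' = ψ ψ'' / ψ'^2 > 0`, `N` is an increasing bijection of `ℝ` (onto, because `β` is), so
`x* = N⁻¹ ∘ β`, and the chain rule with `β' = -(c/ρ)(ρ+b)/ℓ` gives the derivative. -/

open Function

noncomputable def newtonMap (f f' : ℝ → ℝ) (x : ℝ) : ℝ := x - f x / f' x

lemma newtonMap_eq_iff {f f' : ℝ → ℝ} {x y : ℝ} (hne : f' x ≠ 0) :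
    newtonMap f f' x = y ↔ (x - y) * f' x - f x = 0 := by
  rw [newtonMap, sub_eq_iff_eq_add', ← sub_eq_iff_eq_add, eq_comm, div_eq_iff hne, sub_eq_zero,
    eq_comm]

lemma hasDerivAt_newtonMap {f f' f'' : ℝ → ℝ} {x : ℝ} (hf : HasDerivAt f (f' x) x)
    (hf' : HasDerivAt f' (f'' x) x) (hne : f' x ≠ 0) :
    HasDerivAt (newtonMap f f') (f x * f'' x / f' x ^ 2) x := by
  refine ((hasDerivAt_id x).sub (hf.div hf' hne)).congr_deriv ?_
  field_simp
  ring

lemma strictMono_newtonMap {f f' f'' : ℝ → ℝ} (hf : ∀ x, HasDerivAt f (f' x) x)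
    (hf' : ∀ x, HasDerivAt f' (f'' x) x) (hne : ∀ x, f' x ≠ 0) (hpos : ∀ x, 0 < f x * f'' x) :
    StrictMono (newtonMap f f') :=
  strictMono_of_hasDerivAt_pos (fun x => hasDerivAt_newtonMap (hf x) (hf' x) (hne x))
    fun x => div_pos (hpos x) (pow_two_pos_of_ne_zero (hne x))

lemma hasDerivAt_of_comp_eq_of_strictMono {h x β : ℝ → ℝ} {h' β' l : ℝ} (hmono : StrictMono h)
    (hβsurj : Surjective β) (hx : ∀ l, h (x l) = β l) (hβ : HasDerivAt β β' l)
    (hh : HasDerivAt h h' (x l)) (hne : h' ≠ 0) :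
    HasDerivAt x (β' / h') l := by
  have hsurj : Surjective h := fun y =>
    let ⟨l, hl⟩ := hβsurj y; ⟨x l, (hx l).trans hl⟩
  set e := hmono.orderIsoOfSurjective h hsurj
  have hxe : x = e.symm ∘ β := funext fun l => (e.symm_apply_eq.2 (hx l).symm).symm
  have hinv : HasDerivAt e.symm h'⁻¹ (β l) := by
    refine HasDerivAt.of_local_left_inverse e.symm.continuous.continuousAt ?_ hne
      (Filter.Eventually.of_forall e.apply_symm_apply)
    rwa [hxe] at hh
  rw [hxe, div_eq_inv_mul]
  exact hinv.comp l hβ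

theorem stmt_8_general (a b ρ ℓ c Inv k : ℝ)
    (hb : 0 < b) (hρ : 0 < ρ) (hℓ : 0 < ℓ) (hc : 0 < c)
    (ψ ψ' ψ'' : ℝ → ℝ)
    (hψpos : ∀ x, 0 < ψ x)
    (hψ'pos : ∀ x, 0 < ψ' x)
    (hψ''pos : ∀ x, 0 < ψ'' x)
    (hd1 : ∀ x, HasDerivAt ψ (ψ' x) x)
    (hd2 : ∀ x, HasDerivAt ψ' (ψ'' x) x)
    (β : ℝ → ℝ)
    (hβ : ∀ lam, β lam = (Inv - k - (a / b) * (ℓ / ρ) - lam * c / ρ) * ((ρ + b) / ℓ) + a / b)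
    (xstar : ℝ → ℝ)
    (hroot : ∀ lam : ℝ, xstar lam ∈ Set.Ioi (β lam) ∧
      (xstar lam - β lam) * ψ' (xstar lam) - ψ (xstar lam) = 0) :
    (∀ lam : ℝ, HasDerivAt xstar
        (-(ψ' (xstar lam)) ^ 2 * (c / ρ) * ((ρ + b) / ℓ) / (ψ (xstar lam) * ψ'' (xstar lam))) lam ∧
      -(ψ' (xstar lam)) ^ 2 * (c / ρ) * ((ρ + b) / ℓ) / (ψ (xstar lam) * ψ'' (xstar lam)) < 0)
    ∧ StrictAnti xstar := by
  set C := c / ρ * ((ρ + b) / ℓ)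
  have hC : C ≠ 0 := by positivity
  have hψ'ne : ∀ x, ψ' x ≠ 0 := fun x => (hψ'pos x).ne'
  have hβaffine : ∀ lam, β lam = β 0 - lam * C := fun lam => by rw [hβ, hβ]; ring
  have hβd : ∀ lam, HasDerivAt β (-C) lam := fun lam => by
    simpa [← hβaffine] using ((hasDerivAt_id lam).mul_const C).const_sub (β 0)
  have hβsurj : Surjective β := fun y => ⟨(β 0 - y) / C, by rw [hβaffine]; field_simp; ring⟩
  have hx : ∀ lam, newtonMap ψ ψ' (xstar lam) = β lam :=
    fun lam => (newtonMap_eq_iff (hψ'ne _)).2 (hroot lam).2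
  have hmono := strictMono_newtonMap hd1 hd2 hψ'ne fun x => mul_pos (hψpos x) (hψ''pos x)
  have hderiv : ∀ lam, HasDerivAt xstar
      (-(ψ' (xstar lam)) ^ 2 * (c / ρ) * ((ρ + b) / ℓ) / (ψ (xstar lam) * ψ'' (xstar lam))) lam := by
    intro lam
    have hN := hasDerivAt_newtonMap (hd1 (xstar lam)) (hd2 _) (hψ'ne _)
    convert hasDerivAt_of_comp_eq_of_strictMono hmono hβsurj hx (hβd lam) hN
      (div_pos (mul_pos (hψpos _) (hψ''pos _)) (pow_pos (hψ'pos _) 2)).ne' using 1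
    have := (hψpos (xstar lam)).ne'
    have := (hψ''pos (xstar lam)).ne'
    simp only [C]
    field_simp
  have hneg : ∀ lam,
      -(ψ' (xstar lam)) ^ 2 * (c / ρ) * ((ρ + b) / ℓ) / (ψ (xstar lam) * ψ'' (xstar lam)) < 0 :=
    fun lam => by
      have := hψ'pos (xstar lam); have := hψpos (xstar lam); have := hψ''pos (xstar lam)
      apply div_neg_of_neg_of_pos _ (by positivity)
      rw [neg_mul, neg_mul]
      exact neg_neg_of_pos (by positivity)
  exact ⟨fun lam => ⟨hderiv lam, hneg lam⟩, strictAnti_of_hasDerivAt_neg hderiv hneg⟩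

/-- In the mean-reverting model, with
β(λ) = (I − k − (a/b)(ℓ/ρ) − λc/ρ)(ρ+b)/ℓ + a/b, the optimal threshold x*(λ) satisfies
∂x*/∂λ = −(ψ_ρ'(x*))²(c/ρ)((ρ+b)/ℓ) / (ψ_ρ(x*)ψ_ρ''(x*)) < 0 : strictly decreasing in
the traffic-ban intensity λ. -/
theorem stmt_8 (a b σ ρ ℓ c Inv k : ℝ)
    (hb : 0 < b) (hσ : 0 < σ) (hρ : 0 < ρ) (hℓ : 0 < ℓ) (hc : 0 < c)
    (ψ ψ' ψ'' : ℝ → ℝ)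
    (hψpos : ∀ x, 0 < ψ x)
    (hψ'pos : ∀ x, 0 < ψ' x)
    (hψ''pos : ∀ x, 0 < ψ'' x)
    (hd1 : ∀ x, HasDerivAt ψ (ψ' x) x)
    (hd2 : ∀ x, HasDerivAt ψ' (ψ'' x) x)
    (hcont : Continuous ψ'')
    (hODE : ∀ x, σ ^ 2 / 2 * ψ'' x + (a - b * x) * ψ' x - ρ * ψ x = 0)
    (β : ℝ → ℝ)
    (hβ : ∀ lam, β lam = (Inv - k - (a / b) * (ℓ / ρ) - lam * c / ρ) * ((ρ + b) / ℓ) + a / b)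
    (xstar : ℝ → ℝ)
    (hroot : ∀ lam : ℝ, xstar lam ∈ Set.Ioi (β lam) ∧
      (xstar lam - β lam) * ψ' (xstar lam) - ψ (xstar lam) = 0)
    (huniq : ∀ lam x : ℝ, x ∈ Set.Ioi (β lam) → (x - β lam) * ψ' x - ψ x = 0 → x = xstar lam) :
    (∀ lam : ℝ, HasDerivAt xstar
        (-(ψ' (xstar lam)) ^ 2 * (c / ρ) * ((ρ + b) / ℓ) / (ψ (xstar lam) * ψ'' (xstar lam))) lam ∧
      -(ψ' (xstar lam)) ^ 2 * (c / ρ) * ((ρ + b) / ℓ) / (ψ (xstar lam) * ψ'' (xstar lam)) < 0)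
    ∧ StrictAnti xstar :=
  stmt_8_general a b ρ ℓ c Inv k hb hρ hℓ hc ψ ψ' ψ'' hψpos hψ'pos hψ''pos hd1 hd2 β hβ xstar hroot
end

section
/- In the mean-reverting model with β = β(ℓ) := (I − k − (a/b)(ℓ/ρ) − λc/ρ)(ρ+b)/ℓ + a/b, the optimal threshold x*(ℓ) satisfies ∂x*/∂ℓ = −(ψ_ρ'(x*))² ((ρ+b)/ℓ²)(I − k − λc/ρ) / (ψ_ρ''(x*) ψ_ρ(x*)). Consequently x*(ℓ) is strictly decreasing in ℓ if I − k − λc/ρ > 0 and strictly increasing in ℓ if I − k − λc/ρ < 0. -/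
/-!
The optimality condition `(x - β) ψ'(x) = ψ(x)` says `g x = β` for `g x := x - ψ x / ψ' x`,
and `g' = ψ ψ'' / ψ'^2 > 0`. So `g` is a strictly increasing `C¹` map with nonvanishing
derivative, and `x*(ℓ) = g⁻¹ (β ℓ)` near every `ℓ`; the inverse function theorem gives
`x*'(ℓ) = β'(ℓ) ψ'^2 / (ψ ψ'')`. In `β` the term linear in `ℓ` cancels against `1 / ℓ`,
so `β'(ℓ) = -(I - k - λc/ρ)(ρ + b)/ℓ²`, whose sign is that of `-(I - k - λc/ρ)`.
-/

open Filter Topology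

/-- Near `ℓ`, `u` is the local inverse of `g` composed with `v`. -/
theorem HasStrictDerivAt.hasDerivAt_of_comp_eventuallyEq {𝕜 : Type*} [NontriviallyNormedField 𝕜]
    [CompleteSpace 𝕜] {g u v : 𝕜 → 𝕜} {g' v' ℓ : 𝕜} (hg : HasStrictDerivAt g g' (u ℓ))
    (hg' : g' ≠ 0) (hinj : Function.Injective g) (hv : HasDerivAt v v' ℓ)
    (huv : ∀ᶠ t in 𝓝 ℓ, g (u t) = v t) : HasDerivAt u (g'⁻¹ * v') ℓ := by
  have hvℓ : v ℓ = g (u ℓ) := huv.self_of_nhds.symm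
  have hinv := hg.to_localInverse hg'
  rw [← hvℓ] at hinv
  refine (hinv.hasDerivAt.comp ℓ hv).congr_of_eventuallyEq ?_
  have hright := hg.eventually_right_inverse hg'
  rw [← hvℓ] at hright
  filter_upwards [huv, hv.continuousAt.eventually hright] with t ht hright_t
  exact hinj (ht.trans hright_t.symm)

theorem StrictMonoOn.of_hasDerivAt_pos {D : Set ℝ} (hD : Convex ℝ D)
    {f f' : ℝ → ℝ} (hf : ∀ x ∈ D, HasDerivAt f (f' x) x) (hf' : ∀ x ∈ D, 0 < f' x) :
    StrictMonoOn f D :=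
  strictMonoOn_of_hasDerivWithinAt_pos hD (fun x hx => (hf x hx).continuousAt.continuousWithinAt)
    (fun x hx => (hf x (interior_subset hx)).hasDerivWithinAt)
    (fun x hx => hf' x (interior_subset hx))

theorem StrictAntiOn.of_hasDerivAt_neg {D : Set ℝ} (hD : Convex ℝ D)
    {f f' : ℝ → ℝ} (hf : ∀ x ∈ D, HasDerivAt f (f' x) x) (hf' : ∀ x ∈ D, f' x < 0) :
    StrictAntiOn f D :=
  strictAntiOn_of_hasDerivWithinAt_neg hD (fun x hx => (hf x hx).continuousAt.continuousWithinAt)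
    (fun x hx => (hf x (interior_subset hx)).hasDerivWithinAt)
    (fun x hx => hf' x (interior_subset hx))

theorem hasDerivAt_sub_mul_mul_div_add (A m d e : ℝ) {ℓ : ℝ} (hℓ : ℓ ≠ 0) :
    HasDerivAt (fun t => (A - m * t) * (d / t) + e) (-(A * d / ℓ ^ 2)) ℓ := by
  have hlin := ((hasDerivAt_id' ℓ).const_mul m).const_sub A
  have hinv := (hasDerivAt_inv hℓ).const_mul d
  simp only [← div_eq_mul_inv] at hinv
  refine ((hlin.mul hinv).add_const e).congr_deriv ?_
  field_simp
  ring

noncomputable def thresholdMap (ψ ψ' : ℝ → ℝ) (x : ℝ) : ℝ := x - ψ x / ψ' x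

section thresholdMap

variable {ψ ψ' ψ'' : ℝ → ℝ}

theorem thresholdMap_eq_of_root {x β : ℝ} (hx : ψ' x ≠ 0) (h : (x - β) * ψ' x - ψ x = 0) :
    thresholdMap ψ ψ' x = β := by
  rw [thresholdMap]
  field_simp
  linarith

theorem hasDerivAt_thresholdMap {x : ℝ} (hd1 : HasDerivAt ψ (ψ' x) x)
    (hd2 : HasDerivAt ψ' (ψ'' x) x) (hx : ψ' x ≠ 0) :
    HasDerivAt (thresholdMap ψ ψ') (ψ x * ψ'' x / ψ' x ^ 2) x := by
  refine ((hasDerivAt_id x).sub (hd1.div hd2 hx)).congr_deriv ?_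
  field_simp
  ring

variable (hd1 : ∀ x, HasDerivAt ψ (ψ' x) x) (hd2 : ∀ x, HasDerivAt ψ' (ψ'' x) x)
include hd1 hd2

theorem hasStrictDerivAt_thresholdMap (hcont : Continuous ψ'') (hψ' : ∀ x, ψ' x ≠ 0) (x : ℝ) :
    HasStrictDerivAt (thresholdMap ψ ψ') (ψ x * ψ'' x / ψ' x ^ 2) x := by
  have hψ : Continuous ψ := continuous_iff_continuousAt.2 fun y => (hd1 y).continuousAt
  have hψ'c : Continuous ψ' := continuous_iff_continuousAt.2 fun y => (hd2 y).continuousAt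
  refine hasStrictDerivAt_of_hasDerivAt_of_continuousAt
    (Eventually.of_forall fun y => hasDerivAt_thresholdMap (hd1 y) (hd2 y) (hψ' y)) ?_
  exact ((hψ.mul hcont).div (hψ'c.pow 2) fun y => pow_ne_zero 2 (hψ' y)).continuousAt

theorem strictMono_thresholdMap (hψ : ∀ x, 0 < ψ x) (hψ' : ∀ x, 0 < ψ' x)
    (hψ'' : ∀ x, 0 < ψ'' x) : StrictMono (thresholdMap ψ ψ') :=
  strictMono_of_hasDerivAt_pos (fun x => hasDerivAt_thresholdMap (hd1 x) (hd2 x) (hψ' x).ne')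
    fun x => div_pos (mul_pos (hψ x) (hψ'' x)) (pow_pos (hψ' x) 2)

end thresholdMap

theorem stmt_9_general (a b ρ lam c Inv k : ℝ)
    (hb : 0 < b) (hρ : 0 < ρ)
    (ψ ψ' ψ'' : ℝ → ℝ)
    (hψpos : ∀ x, 0 < ψ x)
    (hψ'pos : ∀ x, 0 < ψ' x)
    (hψ''pos : ∀ x, 0 < ψ'' x)
    (hd1 : ∀ x, HasDerivAt ψ (ψ' x) x)
    (hd2 : ∀ x, HasDerivAt ψ' (ψ'' x) x)
    (hcont : Continuous ψ'')
    (β : ℝ → ℝ)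
    (hβ : ∀ ℓ, 0 < ℓ →
      β ℓ = (Inv - k - (a / b) * (ℓ / ρ) - lam * c / ρ) * ((ρ + b) / ℓ) + a / b)
    (xstar : ℝ → ℝ)
    (hroot : ∀ ℓ : ℝ, 0 < ℓ → xstar ℓ ∈ Set.Ioi (β ℓ) ∧
      (xstar ℓ - β ℓ) * ψ' (xstar ℓ) - ψ (xstar ℓ) = 0) :
    (∀ ℓ : ℝ, 0 < ℓ → HasDerivAt xstar
        (-(ψ' (xstar ℓ)) ^ 2 * ((ρ + b) / ℓ ^ 2) * (Inv - k - lam * c / ρ)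
          / (ψ'' (xstar ℓ) * ψ (xstar ℓ))) ℓ)
    ∧ (0 < Inv - k - lam * c / ρ → StrictAntiOn xstar (Set.Ioi 0))
    ∧ (Inv - k - lam * c / ρ < 0 → StrictMonoOn xstar (Set.Ioi 0)) := by
  set A := Inv - k - lam * c / ρ
  set K : ℝ → ℝ := fun ℓ => ψ' (xstar ℓ) ^ 2 * ((ρ + b) / ℓ ^ 2) / (ψ'' (xstar ℓ) * ψ (xstar ℓ))
  have hψ' : ∀ x, ψ' x ≠ 0 := fun x => (hψ'pos x).ne'
  have hg := hasStrictDerivAt_thresholdMap hd1 hd2 hcont hψ'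
  have hinj := (strictMono_thresholdMap hd1 hd2 hψpos hψ'pos hψ''pos).injective
  have hβ' : ∀ ℓ, 0 < ℓ → HasDerivAt β (-(A * (ρ + b) / ℓ ^ 2)) ℓ := fun ℓ hℓ =>
    (hasDerivAt_sub_mul_mul_div_add A (a / b / ρ) (ρ + b) (a / b) hℓ.ne').congr_of_eventuallyEq
      (eventually_gt_nhds hℓ |>.mono fun t ht => by rw [hβ t ht]; ring)
  have hderiv : ∀ ℓ, 0 < ℓ → HasDerivAt xstar (-(A * K ℓ)) ℓ := by
    intro ℓ hℓ
    have hg' : ψ (xstar ℓ) * ψ'' (xstar ℓ) / ψ' (xstar ℓ) ^ 2 ≠ 0 :=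
      (div_pos (mul_pos (hψpos _) (hψ''pos _)) (pow_pos (hψ'pos _) 2)).ne'
    refine ((hg (xstar ℓ)).hasDerivAt_of_comp_eventuallyEq hg' hinj (hβ' ℓ hℓ) ?_).congr_deriv ?_
    · exact (eventually_gt_nhds hℓ).mono fun t ht =>
        thresholdMap_eq_of_root (hψ' _) (hroot t ht).2
    · have := (hψpos (xstar ℓ)).ne'
      have := (hψ''pos (xstar ℓ)).ne'
      simp only [K]
      field_simp
  have hK : ∀ ℓ, 0 < ℓ → 0 < K ℓ := by
    intro ℓ hℓ
    have := hψ'pos (xstar ℓ)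
    have := hψ''pos (xstar ℓ)
    have := hψpos (xstar ℓ)
    positivity
  refine ⟨fun ℓ hℓ => (hderiv ℓ hℓ).congr_deriv (by ring), fun hA => ?_, fun hA => ?_⟩
  · exact StrictAntiOn.of_hasDerivAt_neg (convex_Ioi 0) hderiv
      fun ℓ hℓ => neg_neg_of_pos (mul_pos hA (hK ℓ hℓ))
  · exact StrictMonoOn.of_hasDerivAt_pos (convex_Ioi 0) hderiv
      fun ℓ hℓ => neg_pos.2 (mul_neg_of_neg_of_pos hA (hK ℓ hℓ))

/-- In the mean-reverting model, with
β(ℓ) = (I − k − (a/b)(ℓ/ρ) − λc/ρ)(ρ+b)/ℓ + a/b, the optimal threshold x*(ℓ) satisfies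
∂x*/∂ℓ = −(ψ_ρ'(x*))²((ρ+b)/ℓ²)(I − k − λc/ρ) / (ψ_ρ''(x*)ψ_ρ(x*)); consequently x*(ℓ) is
strictly decreasing in ℓ if I − k − λc/ρ > 0 and strictly increasing if I − k − λc/ρ < 0. -/
theorem stmt_9 (a b σ ρ lam c Inv k : ℝ)
    (hb : 0 < b) (hσ : 0 < σ) (hρ : 0 < ρ)
    (ψ ψ' ψ'' : ℝ → ℝ)
    (hψpos : ∀ x, 0 < ψ x)
    (hψ'pos : ∀ x, 0 < ψ' x)
    (hψ''pos : ∀ x, 0 < ψ'' x)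
    (hd1 : ∀ x, HasDerivAt ψ (ψ' x) x)
    (hd2 : ∀ x, HasDerivAt ψ' (ψ'' x) x)
    (hcont : Continuous ψ'')
    (hODE : ∀ x, σ ^ 2 / 2 * ψ'' x + (a - b * x) * ψ' x - ρ * ψ x = 0)
    (β : ℝ → ℝ)
    (hβ : ∀ ℓ, 0 < ℓ →
      β ℓ = (Inv - k - (a / b) * (ℓ / ρ) - lam * c / ρ) * ((ρ + b) / ℓ) + a / b)
    (xstar : ℝ → ℝ)
    (hroot : ∀ ℓ : ℝ, 0 < ℓ → xstar ℓ ∈ Set.Ioi (β ℓ) ∧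
      (xstar ℓ - β ℓ) * ψ' (xstar ℓ) - ψ (xstar ℓ) = 0)
    (huniq : ∀ ℓ x : ℝ, 0 < ℓ → x ∈ Set.Ioi (β ℓ) →
      (x - β ℓ) * ψ' x - ψ x = 0 → x = xstar ℓ) :
    (∀ ℓ : ℝ, 0 < ℓ → HasDerivAt xstar
        (-(ψ' (xstar ℓ)) ^ 2 * ((ρ + b) / ℓ ^ 2) * (Inv - k - lam * c / ρ)
          / (ψ'' (xstar ℓ) * ψ (xstar ℓ))) ℓ)
    ∧ (0 < Inv - k - lam * c / ρ → StrictAntiOn xstar (Set.Ioi 0))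
    ∧ (Inv - k - lam * c / ρ < 0 → StrictMonoOn xstar (Set.Ioi 0)) :=
  stmt_9_general a b ρ lam c Inv k hb hρ ψ ψ' ψ'' hψpos hψ'pos hψ''pos hd1 hd2 hcont β hβ xstar
    hroot
end

section
/- Suppose condition (b) of the main theorem holds: ℓx + λc < ρ(I − k) for all x in the state space I. Then for every stopping time τ, E_x[−∫_τ^∞ e^{-ρt}(ℓX_t + λc) dt + e^{-ρτ}(I−k)] ≥ 0, with the infimum over stopping times equal to 0 attained in the limit τ → ∞; hence 𝒰(x) = 0 and it is never optimal to switch. -/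
open MeasureTheory Filter Set Real
open scoped ENNReal Topology

/-! Since `∫_a^∞ e^{-ρt} ρ C dt = e^{-ρa} C`, a running cost rate bounded by `ρ C` with
`C = I - k` accumulates after any time `a` at most the discounted reward `e^{-ρa} C`, so the
payoff is nonnegative path by path, whatever the stopping time. At deterministic times `T → ∞`
both the cost tail and `e^{-ρT} C` vanish, and dominated convergence, with dominating function
`∫_0^∞ e^{-ρt} |ℓ X_t + λ c| dt`, carries this to the expectation. -/

lemma setOf_nonneg_and_le_ofReal_eq_Ici {s : ℝ≥0∞} (hs : s ≠ ⊤) :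
    {t : ℝ | 0 ≤ t ∧ s ≤ ENNReal.ofReal t} = Ici s.toReal := by
  ext t
  refine ⟨fun ⟨ht, hst⟩ => (ENNReal.le_ofReal_iff_toReal_le hs ht).mp hst, fun hst => ?_⟩
  have ht : 0 ≤ t := ENNReal.toReal_nonneg.trans hst
  exact ⟨ht, (ENNReal.le_ofReal_iff_toReal_le hs ht).mpr hst⟩

lemma integral_Ici_exp_neg_mul {ρ : ℝ} (hρ : 0 < ρ) (a : ℝ) :
    ∫ t in Ici a, exp (-ρ * t) = exp (-ρ * a) / ρ := by
  rw [integral_Ici_eq_integral_Ioi, integral_exp_mul_Ioi (neg_neg_of_pos hρ), neg_div_neg_eq]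

lemma setIntegral_Ici_exp_neg_mul_le {ρ C a : ℝ} {r : ℝ → ℝ} (hρ : 0 < ρ)
    (hr : IntegrableOn (fun t => exp (-ρ * t) * r t) (Ici a))
    (hrC : ∀ t ∈ Ici a, r t ≤ ρ * C) :
    ∫ t in Ici a, exp (-ρ * t) * r t ≤ exp (-ρ * a) * C :=
  calc ∫ t in Ici a, exp (-ρ * t) * r t
      ≤ ∫ t in Ici a, exp (-ρ * t) * (ρ * C) :=
        setIntegral_mono_on hr (Iff.mpr integrableOn_Ici_iff_integrableOn_Ioi
            ((exp_neg_integrableOn_Ioi a hρ).mul_const _)) measurableSet_Ici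
          fun t ht => mul_le_mul_of_nonneg_left (hrC t ht) (exp_pos _).le
    _ = exp (-ρ * a) * C := by
        rw [integral_mul_const, integral_Ici_exp_neg_mul hρ]
        field_simp

lemma neg_setIntegral_add_ite_nonneg {ρ C : ℝ} {r : ℝ → ℝ} (hρ : 0 < ρ)
    (hr : IntegrableOn (fun t => exp (-ρ * t) * r t) (Ici 0))
    (hrC : ∀ t, 0 ≤ t → r t ≤ ρ * C) (s : ℝ≥0∞) :
    0 ≤ -(∫ t in {t : ℝ | 0 ≤ t ∧ s ≤ ENNReal.ofReal t}, exp (-ρ * t) * r t)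
      + (if s = ⊤ then 0 else exp (-ρ * s.toReal) * C) := by
  rcases eq_or_ne s ⊤ with rfl | hs
  · simp
  · have hs₀ : 0 ≤ s.toReal := ENNReal.toReal_nonneg
    rw [setOf_nonneg_and_le_ofReal_eq_Ici hs, if_neg hs]
    have := setIntegral_Ici_exp_neg_mul_le hρ (hr.mono_set (Ici_subset_Ici.mpr hs₀))
      fun t ht => hrC t (hs₀.trans ht)
    linarith

section Tail

variable {E : Type*} [NormedAddCommGroup E] [NormedSpace ℝ E]

lemma tendsto_setIntegral_Ici_atTop {f : ℝ → E} {a : ℝ} (hf : IntegrableOn f (Ici a)) :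
    Tendsto (fun T => ∫ t in Ici T, f t) atTop (𝓝 0) := by
  have hempty : ⋂ T : ℝ, Ici T = ∅ := iInter_eq_empty_iff.mpr fun t => ⟨t + 1, by simp⟩
  simpa [hempty] using tendsto_setIntegral_of_antitone (fun T => measurableSet_Ici)
    (fun _ _ h => Ici_subset_Ici.mpr h) ⟨a, hf⟩

lemma norm_setIntegral_Ici_le_setIntegral_norm {f : ℝ → E} {a b : ℝ}
    (hf : IntegrableOn f (Ici a)) (hab : a ≤ b) :
    ‖∫ t in Ici b, f t‖ ≤ ∫ t in Ici a, ‖f t‖ :=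
  (norm_integral_le_integral_norm _).trans <| setIntegral_mono_set hf.norm
    (ae_of_all _ fun _ => norm_nonneg _) (Ici_subset_Ici.mpr hab).eventuallyLE

variable {Ω : Type*} {m : MeasurableSpace Ω} {μ : Measure Ω} {F : Ω → ℝ → E}

lemma aestronglyMeasurable_setIntegral (hF : StronglyMeasurable (Function.uncurry F))
    (s : Set ℝ) : AEStronglyMeasurable (fun ω => ∫ t in s, F ω t) μ :=
  (hF.integral_prod_right (ν := volume.restrict s)).aestronglyMeasurable

lemma integrable_setIntegral_Ici (hF : StronglyMeasurable (Function.uncurry F))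
    (hFi : ∀ ω, IntegrableOn (F ω) (Ici 0))
    (hdom : Integrable (fun ω => ∫ t in Ici 0, ‖F ω t‖) μ) {T : ℝ} (hT : 0 ≤ T) :
    Integrable (fun ω => ∫ t in Ici T, F ω t) μ :=
  hdom.mono' (aestronglyMeasurable_setIntegral hF _)
    (ae_of_all _ fun ω => norm_setIntegral_Ici_le_setIntegral_norm (hFi ω) hT)

lemma tendsto_integral_setIntegral_Ici_atTop (hF : StronglyMeasurable (Function.uncurry F))
    (hFi : ∀ ω, IntegrableOn (F ω) (Ici 0))
    (hdom : Integrable (fun ω => ∫ t in Ici 0, ‖F ω t‖) μ) :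
    Tendsto (fun T => ∫ ω, (∫ t in Ici T, F ω t) ∂μ) atTop (𝓝 0) := by
  simpa using tendsto_integral_filter_of_dominated_convergence _
    (Eventually.of_forall fun T => aestronglyMeasurable_setIntegral hF (Ici T))
    ((eventually_ge_atTop 0).mono fun T hT => ae_of_all _ fun ω =>
      norm_setIntegral_Ici_le_setIntegral_norm (hFi ω) hT)
    hdom (ae_of_all _ fun ω => tendsto_setIntegral_Ici_atTop (hFi ω))

end Tail

theorem stmt_16_general {Ω : Type*} {m : MeasurableSpace Ω} {μ : Measure Ω} [IsProbabilityMeasure μ]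
    (ℱ : Filtration ℝ≥0∞ m) (X : ℝ → Ω → ℝ)
    (ρ ℓ lam c Inv k : ℝ)
    (hρ : 0 < ρ)
    (hmeas : Measurable (Function.uncurry X))
    (hstate : ∀ t : ℝ, 0 ≤ t → ∀ ω, ℓ * X t ω + lam * c < ρ * (Inv - k))
    (hptint : ∀ ω, IntegrableOn (fun t => Real.exp (-ρ * t) * (ℓ * X t ω + lam * c))
      (Set.Ici 0))
    (hexpint : Integrable (fun ω =>
      ∫ t in Set.Ici (0 : ℝ), Real.exp (-ρ * t) * |ℓ * X t ω + lam * c|) μ) :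
    (∀ τ : Ω → ℝ≥0∞, IsStoppingTime ℱ (fun ω => (τ ω : WithTop ℝ≥0∞)) →
      Integrable (fun ω =>
        -(∫ t in {t : ℝ | 0 ≤ t ∧ τ ω ≤ ENNReal.ofReal t},
            Real.exp (-ρ * t) * (ℓ * X t ω + lam * c))
          + (if τ ω = ⊤ then 0 else Real.exp (-ρ * (τ ω).toReal) * (Inv - k))) μ →
      0 ≤ ∫ ω,
        (-(∫ t in {t : ℝ | 0 ≤ t ∧ τ ω ≤ ENNReal.ofReal t},
            Real.exp (-ρ * t) * (ℓ * X t ω + lam * c))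
          + (if τ ω = ⊤ then 0 else Real.exp (-ρ * (τ ω).toReal) * (Inv - k))) ∂μ)
    ∧ Tendsto (fun T : ℝ => ∫ ω,
        (-(∫ t in {t : ℝ | 0 ≤ t ∧ ENNReal.ofReal T ≤ ENNReal.ofReal t},
            Real.exp (-ρ * t) * (ℓ * X t ω + lam * c))
          + Real.exp (-ρ * T) * (Inv - k)) ∂μ) atTop (𝓝 0) := by
  refine ⟨fun τ _ _ => integral_nonneg fun ω => neg_setIntegral_add_ite_nonneg hρ (hptint ω)
    (fun t ht => (hstate t ht ω).le) (τ ω), ?_⟩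
  have hF : StronglyMeasurable
      (Function.uncurry fun ω t => exp (-ρ * t) * (ℓ * X t ω + lam * c)) := by
    have hX := hmeas.comp measurable_swap
    exact Measurable.stronglyMeasurable (by fun_prop)
  have hdom : Integrable (fun ω => ∫ t in Ici 0, ‖exp (-ρ * t) * (ℓ * X t ω + lam * c)‖) μ := by
    simpa only [norm_mul, norm_eq_abs, abs_exp] using hexpint
  have hdiscount : Tendsto (fun T => exp (-ρ * T) * (Inv - k)) atTop (𝓝 0) := by
    simpa using (tendsto_exp_atBot.comp
      (tendsto_id.const_mul_atTop_of_neg (neg_neg_of_pos hρ))).mul_const (Inv - k)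
  have hlim := (tendsto_integral_setIntegral_Ici_atTop hF hptint hdom).neg.add hdiscount
  rw [neg_zero, zero_add] at hlim
  refine hlim.congr' ?_
  filter_upwards [eventually_ge_atTop 0] with T hT
  rw [setOf_nonneg_and_le_ofReal_eq_Ici ENNReal.ofReal_ne_top, ENNReal.toReal_ofReal hT,
    integral_add _ (integrable_const _), integral_neg, integral_const, probReal_univ, one_smul]
  exact (integrable_setIntegral_Ici hF hptint hdom hT).neg

/-- If ℓx + λc < ρ(I − k) throughout the state space, then for every
stopping time τ, E_x[−∫_τ^∞ e^{−ρt}(ℓX_t + λc) dt + e^{−ρτ}(I − k)] ≥ 0, and the infimum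
0 is attained in the limit τ → ∞; hence 𝒰(x) = 0 and it is never optimal to switch.
(On {τ = ∞} the payoff is 0, in accordance with the convention of the paper.) -/
theorem stmt_16 {Ω : Type*} {m : MeasurableSpace Ω} {μ : Measure Ω} [IsProbabilityMeasure μ]
    (ℱ : Filtration ℝ≥0∞ m) (X : ℝ → Ω → ℝ)
    (ρ ℓ lam c Inv k : ℝ)
    (hρ : 0 < ρ) (hℓ : 0 < ℓ) (hlam : 0 ≤ lam) (hc : 0 ≤ c)
    (hk : 0 < k) (hkI : k < Inv)
    (hmeas : Measurable (Function.uncurry X))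
    (hstate : ∀ t : ℝ, 0 ≤ t → ∀ ω, ℓ * X t ω + lam * c < ρ * (Inv - k))
    (hptint : ∀ ω, IntegrableOn (fun t => Real.exp (-ρ * t) * (ℓ * X t ω + lam * c))
      (Set.Ici 0))
    (hexpint : Integrable (fun ω =>
      ∫ t in Set.Ici (0 : ℝ), Real.exp (-ρ * t) * |ℓ * X t ω + lam * c|) μ) :
    (∀ τ : Ω → ℝ≥0∞, IsStoppingTime ℱ (fun ω => (τ ω : WithTop ℝ≥0∞)) →
      Integrable (fun ω =>
        -(∫ t in {t : ℝ | 0 ≤ t ∧ τ ω ≤ ENNReal.ofReal t},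
            Real.exp (-ρ * t) * (ℓ * X t ω + lam * c))
          + (if τ ω = ⊤ then 0 else Real.exp (-ρ * (τ ω).toReal) * (Inv - k))) μ →
      0 ≤ ∫ ω,
        (-(∫ t in {t : ℝ | 0 ≤ t ∧ τ ω ≤ ENNReal.ofReal t},
            Real.exp (-ρ * t) * (ℓ * X t ω + lam * c))
          + (if τ ω = ⊤ then 0 else Real.exp (-ρ * (τ ω).toReal) * (Inv - k))) ∂μ)
    ∧ Tendsto (fun T : ℝ => ∫ ω,
        (-(∫ t in {t : ℝ | 0 ≤ t ∧ ENNReal.ofReal T ≤ ENNReal.ofReal t},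
            Real.exp (-ρ * t) * (ℓ * X t ω + lam * c))
          + Real.exp (-ρ * T) * (Inv - k)) ∂μ) atTop (𝓝 0) :=
  stmt_16_general ℱ X ρ ℓ lam c Inv k hρ hmeas hstate hptint hexpint
end

section
/- Let ψ: ℝ → (0,∞) be strictly increasing, strictly convex and C², β ∈ ℝ, γ > 0, and let x* > β solve (x* − β)ψ'(x*) = ψ(x*). Then for all x < x*: −γ(x* − β)·ψ(x)/ψ(x*) ≤ −γ(x − β). Equivalently, the continuation-region value Û(x) = C ψ(x) lies below the stopping cost I − k − V̂(x) = −γ(x − β) on (−∞, x*). -/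
/-!
The smooth-fit condition `(x* - β) ψ'(x*) = ψ(x*)` says that the tangent line of `ψ` at `x*`
passes through `(β, 0)`, i.e. it is `y ↦ ψ(x*) (y - β) / (x* - β)`. Since `ψ'' > 0`, `ψ` is
convex and lies above this tangent, which gives `(x - β) ψ(x*) ≤ (x* - β) ψ(x)` for every `x`.
-/

open Set

theorem convexOn_univ_of_hasDerivAt2_nonneg {f f' f'' : ℝ → ℝ}
    (hf : ∀ x, HasDerivAt f (f' x) x) (hf' : ∀ x, HasDerivAt f' (f'' x) x)
    (hf'' : ∀ x, 0 ≤ f'' x) : ConvexOn ℝ univ f :=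
  convexOn_of_hasDerivWithinAt2_nonneg convex_univ
    (fun x _ ↦ (hf x).continuousAt.continuousWithinAt)
    (fun x _ ↦ (hf x).hasDerivWithinAt) (fun x _ ↦ (hf' x).hasDerivWithinAt)
    (fun x _ ↦ hf'' x)

theorem ConvexOn.add_mul_sub_le_of_hasDerivAt {S : Set ℝ} {f : ℝ → ℝ} {f' a x : ℝ}
    (hfc : ConvexOn ℝ S f) (ha : a ∈ S) (hx : x ∈ S) (hf : HasDerivAt f f' a) :
    f a + f' * (x - a) ≤ f x := by
  rcases lt_trichotomy x a with hxa | rfl | hax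
  · have hslope := hfc.slope_le_of_hasDerivAt hx ha hxa hf
    rw [slope_def_field, div_le_iff₀ (sub_pos.mpr hxa)] at hslope
    linarith
  · simp
  · have hslope := hfc.le_slope_of_hasDerivAt ha hx hax hf
    rw [slope_def_field, le_div_iff₀ (sub_pos.mpr hax)] at hslope
    linarith

theorem ConvexOn.sub_mul_le_sub_mul_of_tangent_through {S : Set ℝ} {f : ℝ → ℝ} {f' a b x : ℝ}
    (hfc : ConvexOn ℝ S f) (ha : a ∈ S) (hx : x ∈ S) (hf : HasDerivAt f f' a) (hba : b ≤ a)
    (htangent : (a - b) * f' = f a) :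
    (x - b) * f a ≤ (a - b) * f x :=
  calc (x - b) * f a = (a - b) * (f a + f' * (x - a)) := by rw [← htangent]; ring
    _ ≤ (a - b) * f x :=
      mul_le_mul_of_nonneg_left (hfc.add_mul_sub_le_of_hasDerivAt ha hx hf) (sub_nonneg.mpr hba)

theorem stmt_18_general (β γ xstar : ℝ) (ψ ψ' ψ'' : ℝ → ℝ)
    (hψpos : ∀ x, 0 < ψ x)
    (hd1 : ∀ x, HasDerivAt ψ (ψ' x) x)
    (hd2 : ∀ x, HasDerivAt ψ' (ψ'' x) x)
    (hconv : ∀ x, 0 < ψ'' x)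
    (hγ : 0 < γ) (hx : β < xstar)
    (hfit : (xstar - β) * ψ' xstar = ψ xstar) :
    ∀ x < xstar, -γ * (xstar - β) * (ψ x / ψ xstar) ≤ -γ * (x - β) := by
  intro x _
  have hψconvex : ConvexOn ℝ univ ψ :=
    convexOn_univ_of_hasDerivAt2_nonneg hd1 hd2 fun y ↦ (hconv y).le
  have hkey : x - β ≤ (xstar - β) * (ψ x / ψ xstar) := by
    rw [mul_div_assoc', le_div_iff₀ (hψpos xstar)]
    exact hψconvex.sub_mul_le_sub_mul_of_tangent_through (mem_univ _) (mem_univ _)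
      (hd1 xstar) hx.le hfit
  rw [mul_assoc]
  exact mul_le_mul_of_nonpos_left hkey (neg_nonpos.mpr hγ.le)

/-- For ψ > 0 strictly increasing, strictly convex, C², γ > 0 and x* > β
solving (x* − β)ψ'(x*) = ψ(x*), for all x < x* one has
−γ(x* − β)ψ(x)/ψ(x*) ≤ −γ(x − β): the continuation value lies below the stopping cost. -/
theorem stmt_18 (β γ xstar : ℝ) (ψ ψ' ψ'' : ℝ → ℝ)
    (hψpos : ∀ x, 0 < ψ x)
    (hmono : StrictMono ψ)
    (hd1 : ∀ x, HasDerivAt ψ (ψ' x) x)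
    (hd2 : ∀ x, HasDerivAt ψ' (ψ'' x) x)
    (hconv : ∀ x, 0 < ψ'' x)
    (hγ : 0 < γ) (hx : β < xstar)
    (hfit : (xstar - β) * ψ' xstar = ψ xstar) :
    ∀ x < xstar, -γ * (xstar - β) * (ψ x / ψ xstar) ≤ -γ * (x - β) :=
  stmt_18_general β γ xstar ψ ψ' ψ'' hψpos hd1 hd2 hconv hγ hx hfit
end
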